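/- For every μ > 0 and every λ > 0, ∫_0^∞ e^{−λt} q^μ(t) dt = 1/(√λ + μ). -/

import Mathlib

/-!
The Laplace transform of `t^{-1/2}/√π` is `1/√λ` (a Gamma integral). For the erfc term, write
`e^{(μ²-λ)t} ∫_{μ√t}^∞ e^{-τ²} dτ` as the `τ`-section of a kernel on the region `μ√t < τ` and
integrate in `t` first (Tonelli/Fubini): the `t`-sections are elementary, and what remains are
Gaussian integrals, giving `μ / (√λ (√λ + μ))`. The difference is `1/(√λ + μ)`.
-/

open MeasureTheory

/-- The complementary error function `erfc(s) = (2/√π) ∫_s^∞ e^{−τ²} dτ`. -/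
noncomputable def erfc (s : ℝ) : ℝ :=
  (2 / Real.sqrt Real.pi) * ∫ τ in Set.Ioi s, Real.exp (-τ ^ 2)

/-- `q^μ(t) = t^{-1/2}/√π − μ e^{μ²t} erfc(μ√t)`. -/
noncomputable def qFun (μ t : ℝ) : ℝ :=
  t ^ (-(1 : ℝ) / 2) / Real.sqrt Real.pi - μ * Real.exp (μ ^ 2 * t) * erfc (μ * Real.sqrt t)

open Set Real

lemma integral_exp_neg_mul_mul_rpow_neg_half {l : ℝ} (hl : 0 < l) :
    ∫ t in Ioi (0 : ℝ), exp (-l * t) * t ^ (-(1 : ℝ) / 2) = √π / √l := by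
  have h := integral_rpow_mul_exp_neg_mul_rpow (p := 1) (q := -(1 : ℝ) / 2) one_pos (by norm_num) hl
  have hexp : -(-(1 : ℝ) / 2 + 1) / 1 = -(1 / 2) := by norm_num
  rw [hexp, show (-(1 : ℝ) / 2 + 1) / 1 = 1 / 2 by norm_num, Gamma_one_half_eq, rpow_neg hl.le,
    ← sqrt_eq_rpow] at h
  simp only [rpow_one] at h
  simp_rw [mul_comm (exp _), h]
  field_simp

lemma integrableOn_exp_neg_mul_mul_rpow_neg_half {l : ℝ} (hl : 0 < l) :
    IntegrableOn (fun t => exp (-l * t) * t ^ (-(1 : ℝ) / 2)) (Ioi 0) := by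
  have := integrableOn_rpow_mul_exp_neg_mul_rpow (p := 1) (s := -(1 : ℝ) / 2) (by norm_num) one_pos hl
  simpa only [rpow_one, mul_comm (_ ^ _)] using this

lemma integral_sq_mul_exp_neg_sq : ∫ τ in Ioi (0 : ℝ), τ ^ 2 * exp (-τ ^ 2) = √π / 4 := by
  have h := integral_rpow_mul_exp_neg_mul_rpow (p := 2) (q := 2) two_pos (by norm_num) one_pos
  have hΓ : Gamma (3 / 2) = √π / 2 := by
    rw [show (3 / 2 : ℝ) = 1 / 2 + 1 by norm_num, Gamma_add_one (by norm_num), Gamma_one_half_eq]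
    ring
  rw [show ((2 : ℝ) + 1) / 2 = 3 / 2 by norm_num, hΓ, one_rpow] at h
  simp only [rpow_two, neg_mul, one_mul] at h
  rw [h]
  ring

lemma integral_exp_mul {c : ℝ} (hc : c ≠ 0) (b : ℝ) :
    ∫ t in (0 : ℝ)..b, exp (c * t) = (exp (c * b) - 1) / c := by
  rw [intervalIntegral.integral_comp_mul_left (fun t => exp t) hc, integral_exp, mul_zero, exp_zero,
    smul_eq_mul, inv_mul_eq_div]

noncomputable def erfcKernel (μ l t τ : ℝ) : ℝ :=
  (Ioi (μ * √t)).indicator (fun τ => exp ((μ ^ 2 - l) * t - τ ^ 2)) τ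

lemma integrable_erfcKernel {μ l : ℝ} (hμ : 0 ≤ μ) (hl : 0 < l) :
    Integrable (Function.uncurry (erfcKernel μ l))
      ((volume.restrict (Ioi 0)).prod (volume.restrict (Ioi 0))) := by
  set θ := l / (l + μ ^ 2)
  have hθ : 0 < θ := by positivity
  have hθ1 : θ ≤ 1 := (div_le_one (by positivity)).2 (by nlinarith)
  have hθμ : θ * μ ^ 2 < l := by
    rw [div_mul_eq_mul_div, div_lt_iff₀ (by positivity)]
    nlinarith
  have hmeas : Measurable (Function.uncurry (erfcKernel μ l)) := by
    exact Measurable.indicator (by fun_prop) (measurableSet_lt (by fun_prop) measurable_snd)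
  -- dominated by `e^{-(l - θμ²)t} e^{-θτ²}`, since `μ²t ≤ τ²` on the support
  refine (Integrable.mul_prod (exp_neg_integrableOn_Ioi 0 (sub_pos.2 hθμ))
    (integrable_exp_neg_mul_sq hθ).integrableOn).mono' hmeas.aestronglyMeasurable ?_
  rw [Measure.prod_restrict, ae_restrict_iff' (measurableSet_Ioi.prod measurableSet_Ioi)]
  refine ae_of_all _ fun ⟨t, τ⟩ ⟨ht, _⟩ => ?_
  simp only [Function.uncurry_apply_pair, erfcKernel, indicator]
  split_ifs with hτ
  · rw [norm_of_nonneg (exp_pos _).le, ← exp_add]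
    have hsq : μ ^ 2 * t ≤ τ ^ 2 := by
      have := mul_self_le_mul_self (by positivity) (le_of_lt (mem_Ioi.1 hτ))
      rwa [mul_mul_mul_comm, mul_self_sqrt (le_of_lt ht), ← sq, ← sq] at this
    exact exp_le_exp.2 (by nlinarith [mul_nonneg (sub_nonneg.2 hθ1) (sub_nonneg.2 hsq)])
  · rw [norm_zero]
    positivity

lemma integral_erfcKernel_snd {μ : ℝ} (hμ : 0 ≤ μ) (l t : ℝ) :
    ∫ τ in Ioi 0, erfcKernel μ l t τ = exp ((μ ^ 2 - l) * t) * ∫ τ in Ioi (μ * √t), exp (-τ ^ 2) := by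
  rw [← integral_const_mul]
  simp_rw [erfcKernel]
  rw [setIntegral_indicator measurableSet_Ioi, Ioi_inter_Ioi, sup_of_le_right (by positivity)]
  simp_rw [sub_eq_add_neg, exp_add]

lemma integral_erfcKernel_fst {μ τ : ℝ} (hμ : 0 < μ) (hτ : 0 < τ) (l : ℝ) :
    ∫ t in Ioi 0, erfcKernel μ l t τ =
      exp (-τ ^ 2) * ∫ t in (0 : ℝ)..(τ / μ) ^ 2, exp ((μ ^ 2 - l) * t) := by
  have hsupp : ∀ t, erfcKernel μ l t τ = (Iio ((τ / μ) ^ 2)).indicator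
      (fun t => exp ((μ ^ 2 - l) * t - τ ^ 2)) t := by
    intro t
    have hiff : μ * √t < τ ↔ t < (τ / μ) ^ 2 := by
      rw [mul_comm, ← lt_div_iff₀ hμ, sqrt_lt' (by positivity)]
    simp only [erfcKernel, indicator, mem_Ioi, mem_Iio, hiff]
  simp_rw [hsupp]
  rw [setIntegral_indicator measurableSet_Iio, Ioi_inter_Iio, ← integral_Ioc_eq_integral_Ioo,
    ← intervalIntegral.integral_of_le (by positivity), ← intervalIntegral.integral_const_mul]
  simp_rw [sub_eq_add_neg, exp_add, mul_comm (exp (-τ ^ 2))]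

lemma integral_exp_neg_sq_mul_integral_exp_mul {μ l : ℝ} (hμ : 0 < μ) (hl : 0 < l) :
    ∫ τ in Ioi (0 : ℝ), exp (-τ ^ 2) * ∫ t in (0 : ℝ)..(τ / μ) ^ 2, exp ((μ ^ 2 - l) * t) =
      √π / (2 * √l * (√l + μ)) := by
  rcases eq_or_ne (μ ^ 2 - l) 0 with hc | hc
  · have hlμ : √l = μ := by rw [← sub_eq_zero.1 hc, sqrt_sq hμ.le]
    have hpt : ∀ τ, exp (-τ ^ 2) * ∫ t in (0 : ℝ)..(τ / μ) ^ 2, exp ((μ ^ 2 - l) * t) =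
        τ ^ 2 * exp (-τ ^ 2) / μ ^ 2 := by
      intro τ
      simp only [hc, zero_mul, exp_zero, intervalIntegral.integral_const, sub_zero, smul_eq_mul,
        mul_one]
      ring
    simp_rw [hpt]
    rw [integral_div, integral_sq_mul_exp_neg_sq, hlμ]
    field_simp
    ring
  · have hpt : ∀ τ, exp (-τ ^ 2) * ∫ t in (0 : ℝ)..(τ / μ) ^ 2, exp ((μ ^ 2 - l) * t) =
        (exp (-(l / μ ^ 2) * τ ^ 2) - exp (-1 * τ ^ 2)) / (μ ^ 2 - l) := by
      intro τ
      have hexp : -τ ^ 2 + (μ ^ 2 - l) * (τ / μ) ^ 2 = -(l / μ ^ 2) * τ ^ 2 := by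
        field_simp
        ring
      rw [integral_exp_mul hc, mul_div, mul_sub, ← exp_add, hexp, mul_one, neg_one_mul]
    simp_rw [hpt]
    rw [integral_div, integral_sub (integrable_exp_neg_mul_sq (by positivity)).integrableOn
      (integrable_exp_neg_mul_sq one_pos).integrableOn, integral_gaussian_Ioi, integral_gaussian_Ioi,
      div_one, div_div_eq_mul_div, sqrt_div' _ hl.le, sqrt_mul' _ (sq_nonneg μ), sqrt_sq hμ.le]
    have hsl : μ ^ 2 - l = (μ - √l) * (μ + √l) := by linear_combination sq_sqrt hl.le
    have hne : μ - √l ≠ 0 := fun h => hc (by rw [hsl, h, zero_mul])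
    rw [hsl]
    field_simp
    ring

lemma exp_neg_mul_mul_exp_mul_erfc_eq_integral_erfcKernel {μ : ℝ} (hμ : 0 ≤ μ) (l t : ℝ) :
    exp (-l * t) * (μ * exp (μ ^ 2 * t) * erfc (μ * √t)) =
      2 * μ / √π * ∫ τ in Ioi 0, erfcKernel μ l t τ := by
  rw [integral_erfcKernel_snd hμ, erfc, sub_mul, sub_eq_neg_add, exp_add, ← neg_mul]
  ring

lemma integrableOn_exp_neg_mul_mul_exp_mul_erfc {μ l : ℝ} (hμ : 0 ≤ μ) (hl : 0 < l) :
    IntegrableOn (fun t => exp (-l * t) * (μ * exp (μ ^ 2 * t) * erfc (μ * √t))) (Ioi 0) := by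
  simp_rw [IntegrableOn, exp_neg_mul_mul_exp_mul_erfc_eq_integral_erfcKernel hμ]
  exact (integrable_erfcKernel hμ hl).integral_prod_left.const_mul _

lemma integral_exp_neg_mul_mul_exp_mul_erfc {μ l : ℝ} (hμ : 0 < μ) (hl : 0 < l) :
    ∫ t in Ioi 0, exp (-l * t) * (μ * exp (μ ^ 2 * t) * erfc (μ * √t)) = μ / (√l * (√l + μ)) := by
  simp_rw [exp_neg_mul_mul_exp_mul_erfc_eq_integral_erfcKernel hμ.le]
  rw [integral_const_mul, integral_integral_swap (integrable_erfcKernel hμ.le hl),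
    setIntegral_congr_fun measurableSet_Ioi fun τ hτ => integral_erfcKernel_fst hμ hτ l,
    integral_exp_neg_sq_mul_integral_exp_mul hμ hl]
  field_simp

/-- For `μ > 0`, `λ > 0`: `∫_0^∞ e^{−λt} q^μ(t) dt = 1/(√λ + μ)`. -/
theorem stmt4 (μ l : ℝ) (hμ : 0 < μ) (hl : 0 < l) :
    (∫ t in Set.Ioi (0 : ℝ), Real.exp (-l * t) * qFun μ t) =
      1 / (Real.sqrt l + μ) := by
  calc ∫ t in Ioi 0, exp (-l * t) * qFun μ t
      = (∫ t in Ioi 0, exp (-l * t) * t ^ (-(1 : ℝ) / 2) / √π) -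
          ∫ t in Ioi 0, exp (-l * t) * (μ * exp (μ ^ 2 * t) * erfc (μ * √t)) := by
        rw [← integral_sub ((integrableOn_exp_neg_mul_mul_rpow_neg_half hl).div_const _)
          (integrableOn_exp_neg_mul_mul_exp_mul_erfc hμ.le hl)]
        congr 1 with t
        rw [qFun]
        ring
    _ = 1 / (√l + μ) := by
        rw [integral_div, integral_exp_neg_mul_mul_rpow_neg_half hl,
          integral_exp_neg_mul_mul_exp_mul_erfc hμ hl]
        field_simp
        ring
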